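/- Let x = Σ_k λ_k x(b^k) be a nonzero vector in N_{a_1,a_2} annihilated by all X_i = X_{α_i} + X_{α_{n+i}} for 1 ≤ i ≤ n−1 (i.e., a 𝔟^+-highest weight vector) which is also a weight vector. Then some b^{k_0} occurring in x satisfies b^{k_0}_1 = b^{k_0}_2 = ⋯ = b^{k_0}_{n−1} = −1, and some b^{k_1} occurring in x satisfies b^{k_1}_{n+2} = ⋯ = b^{k_1}_{2n} = 0. -/
import Mathlib


open Finsupp

attribute [local instance] Classical.propDecidable

noncomputable section

/-- The ambient vector space with basis indexed by `ℂ^m`. -/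
abbrev Wsp (m : ℕ) : Type := (Fin m → ℂ) →₀ ℂ

/-- the `i`-th standard basis vector of `ℂ^m`. -/
def eps (m : ℕ) (i : Fin m) : Fin m → ℂ := fun j => if j = i then 1 else 0

/-- `z` is a negative integer. -/
def NegInt (z : ℂ) : Prop := ∃ k : ℤ, k < 0 ∧ z = (k : ℂ)

/-- the basis vector `x(b)`. -/
def xv (m : ℕ) (b : Fin m → ℂ) : Wsp m := Finsupp.single b 1

/-- the multiplication operator `q_i`. -/
def qOp (m : ℕ) (i : Fin m) : Wsp m →ₗ[ℂ] Wsp m :=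
  Finsupp.lsum ℂ fun b => (if NegInt (b i) then b i + 1 else 1) • Finsupp.lsingle (b + eps m i)

/-- the derivation operator `p_j`. -/
def pOp (m : ℕ) (j : Fin m) : Wsp m →ₗ[ℂ] Wsp m :=
  Finsupp.lsum ℂ fun b => (if NegInt (b j) then 1 else b j) • Finsupp.lsingle (b - eps m j)

/-- the operator corresponding to the elementary matrix `E_{i,j}`. -/
def Eop (m : ℕ) (i j : Fin m) : Wsp m →ₗ[ℂ] Wsp m := qOp m i ∘ₗ pOp m j

/-- commutator of operators. -/
def oComm {m : ℕ} (f g : Wsp m →ₗ[ℂ] Wsp m) : Wsp m →ₗ[ℂ] Wsp m := f ∘ₗ g - g ∘ₗ f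

/-- `z` is a negative (real) number. -/
def Cneg (z : ℂ) : Prop := z.im = 0 ∧ z.re < 0

/-- the index set `P_a`. -/
def Pa (m : ℕ) (a : Fin m → ℂ) : Set (Fin m → ℂ) :=
  {b | ∀ i, (∃ k : ℤ, b i - a i = (k : ℂ)) ∧ (Cneg (b i) ↔ Cneg (a i))}

end

noncomputable section

/-- the set of admissible indices `b` for the module `N_{a₁,a₂}` over `sl_{2n}`
(`0`-indexed: entries `0,…,n−2` are negative integers congruent to `−1`, entry `n−1`
is in `a₁ + ℤ`, entry `n` is in `a₂ + ℤ`, entries `n+1,…,2n−1` are natural numbers,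
and the coordinate sum equals `a₁ + a₂ − (n−1)`). -/
def adm (n : ℕ) (a1 a2 : ℂ) : Set (Fin (n + n) → ℂ) :=
  {b | (∀ i : Fin (n + n),
      ((i : ℕ) < n - 1 → ∃ k : ℤ, k < 0 ∧ b i = (k : ℂ)) ∧
      ((i : ℕ) = n - 1 → ∃ k : ℤ, b i = a1 + (k : ℂ)) ∧
      ((i : ℕ) = n → ∃ k : ℤ, b i = a2 + (k : ℂ)) ∧
      (n < (i : ℕ) → ∃ k : ℕ, b i = (k : ℂ))) ∧
    ∑ i, b i = a1 + a2 - ((n : ℂ) - 1)}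

/-- the `𝔥_θ`-weight of `x(b)`. -/
def wtTheta (n : ℕ) (b : Fin (n + n) → ℂ) : ℂ :=
  ∑ i : Fin (n + n), (if (i : ℕ) < n then b i else -b i)

/-- the `i`-th component of the `𝔥_n`-weight of `x(b)` (for `0 ≤ i`, `i + 1 < n`). -/
def wtHn (n : ℕ) (b : Fin (n + n) → ℂ) (i : ℕ) (h : i + 1 < n) : ℂ :=
  (b ⟨i, by omega⟩ - b ⟨i + 1, by omega⟩) +
    (b ⟨n + i, by omega⟩ - b ⟨n + i + 1, by omega⟩)

/-- the raising operator `X_i = X_{α_i} + X_{α_{n+i}}` of `𝔟` (for `0 ≤ i`, `i + 1 < n`,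
`0`-indexed). -/
def XopB (n : ℕ) (i : ℕ) (h : i + 1 < n) : Wsp (n + n) →ₗ[ℂ] Wsp (n + n) :=
  Eop (n + n) ⟨i, by omega⟩ ⟨i + 1, by omega⟩ +
    Eop (n + n) ⟨n + i, by omega⟩ ⟨n + i + 1, by omega⟩

/-- the lowering operator `X_{−i} = X_{−α_i} + X_{−α_{n+i}}` of `𝔟` (for `0 ≤ i`,
`i + 1 < n`, `0`-indexed). -/
def XmB (n : ℕ) (i : ℕ) (h : i + 1 < n) : Wsp (n + n) →ₗ[ℂ] Wsp (n + n) :=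
  Eop (n + n) ⟨i + 1, by omega⟩ ⟨i, by omega⟩ +
    Eop (n + n) ⟨n + i + 1, by omega⟩ ⟨n + i, by omega⟩

/-- the operator of `Y = Σ_{i=1}^n E_{i,n+i} ∈ 𝔞`. -/
def Yop (n : ℕ) : Wsp (n + n) →ₗ[ℂ] Wsp (n + n) :=
  ∑ i : Fin n, Eop (n + n) (Fin.castAdd n i) (Fin.natAdd n i)

/-- the operator of `X = Σ_{i=1}^n E_{n+i,i} ∈ 𝔞`. -/
def Xop (n : ℕ) : Wsp (n + n) →ₗ[ℂ] Wsp (n + n) :=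
  ∑ i : Fin n, Eop (n + n) (Fin.natAdd n i) (Fin.castAdd n i)

/-- the operator of `H = Σ_{i=1}^n (E_{i,i} − E_{n+i,n+i}) ∈ 𝔞`. -/
def Hop (n : ℕ) : Wsp (n + n) →ₗ[ℂ] Wsp (n + n) :=
  ∑ i : Fin n,
    (Eop (n + n) (Fin.castAdd n i) (Fin.castAdd n i)
      - Eop (n + n) (Fin.natAdd n i) (Fin.natAdd n i))

/-- `|k| = k_1 + ⋯ + k_{n−1}` (with `k` `1`-indexed). -/
def ksum (n : ℕ) (k : ℕ → ℕ) : ℕ := ∑ j ∈ Finset.range (n - 1), k (j + 1)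

/-- the partial sum `k_1 + ⋯ + k_j`. -/
def psum (k : ℕ → ℕ) (j : ℕ) : ℕ := ∑ t ∈ Finset.range j, k (t + 1)

/-- the coefficient `κ(k)` of proposition 5. -/
def kappa (n : ℕ) (a1 : ℂ) (b : ℤ) (c : ℕ) (k : ℕ → ℕ) : ℂ :=
  (∏ j ∈ Finset.Icc 2 (n - 1), ((psum k j).choose (psum k (j - 1)) : ℂ)) *
    (∏ j ∈ Finset.range (ksum n k), ((c : ℂ) + 1 - ((j : ℂ) + 1))) /
    (((ksum n k).factorial : ℂ) *
      ∏ j ∈ Finset.range (ksum n k), (a1 + (b : ℂ) + ((j : ℂ) + 1)))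

/-- the admissible index of the vector
`x_k(b,c) = x(−1−k_1,…,−1−k_{n−1}, a_1+b+|k|, a_2−b−c+k_1, k_2,…,k_{n−1}, c−|k|)`. -/
def xk (n : ℕ) (a1 a2 : ℂ) (b : ℤ) (c : ℕ) (k : ℕ → ℕ) : Fin (n + n) → ℂ :=
  fun i =>
    if (i : ℕ) < n - 1 then -1 - (k ((i : ℕ) + 1) : ℂ)
    else if (i : ℕ) = n - 1 then a1 + (b : ℂ) + (ksum n k : ℂ)
    else if (i : ℕ) = n then a2 - (b : ℂ) - (c : ℂ) + (k 1 : ℂ)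
    else if (i : ℕ) + 1 < n + n then (k ((i : ℕ) + 2 - n) : ℂ)
    else (c : ℂ) - (ksum n k : ℂ)

/-- turn a tuple `k : Fin (n−1) → Fin (c+1)` into a `1`-indexed sequence `ℕ → ℕ`. -/
def toK (n : ℕ) {c : ℕ} (k : Fin (n - 1) → Fin (c + 1)) : ℕ → ℕ :=
  fun j => if h : 1 ≤ j ∧ j ≤ n - 1 then (k ⟨j - 1, by omega⟩ : ℕ) else 0

/-- the (finite) index set `{k ∈ ℕ^{n−1} : |k| ≤ c}`. -/
def Kset (n c : ℕ) : Finset (Fin (n - 1) → Fin (c + 1)) :=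
  Finset.univ.filter fun k => ∑ i, (k i : ℕ) ≤ c

/-- the canonical `𝔟⁺`-highest weight vector `x(b,c) = Σ_{|k| ≤ c} κ(k) x_k(b,c)`. -/
def hwVec (n : ℕ) (a1 a2 : ℂ) (b : ℤ) (c : ℕ) : Wsp (n + n) :=
  ∑ k ∈ Kset n c, kappa n a1 b c (toK n k) • xv (n + n) (xk n a1 a2 b c (toK n k))

end


noncomputable section
/-- coefficient of `Eop` on a basis vector -/
def coefE (m : ℕ) (i j : Fin m) (b : Fin m → ℂ) : ℂ :=
  (if NegInt (b j) then 1 else b j) *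
    (if NegInt ((b - eps m j) i) then (b - eps m j) i + 1 else 1)

lemma pOp_single (m : ℕ) (j : Fin m) (b : Fin m → ℂ) (r : ℂ) :
    pOp m j (Finsupp.single b r) =
      (if NegInt (b j) then 1 else b j) • Finsupp.single (b - eps m j) r := by
  rw [pOp, Finsupp.lsum_single]
  rw [LinearMap.smul_apply, Finsupp.lsingle_apply]

lemma qOp_single (m : ℕ) (i : Fin m) (b : Fin m → ℂ) (r : ℂ) :
    qOp m i (Finsupp.single b r) =
      (if NegInt (b i) then b i + 1 else 1) • Finsupp.single (b + eps m i) r := by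
  rw [qOp, Finsupp.lsum_single]
  rw [LinearMap.smul_apply, Finsupp.lsingle_apply]

lemma Eop_single (m : ℕ) (i j : Fin m) (b : Fin m → ℂ) (r : ℂ) :
    Eop m i j (Finsupp.single b r) =
      coefE m i j b • Finsupp.single (b - eps m j + eps m i) r := by
  rw [Eop, LinearMap.comp_apply, pOp_single, map_smul, qOp_single, coefE, smul_smul]

lemma Eop_apply (m : ℕ) (i j : Fin m) (x : Wsp m) (c : Fin m → ℂ) :
    (Eop m i j x) c =
      ∑ b ∈ x.support, x b * coefE m i j b *
        (if b - eps m j + eps m i = c then 1 else 0) := by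
  conv_lhs => rw [show x = ∑ b ∈ x.support, Finsupp.single b (x b) from
    (Finsupp.sum_single x).symm, map_sum, Finsupp.finset_sum_apply]
  refine Finset.sum_congr rfl fun b _ => ?_
  rw [Eop_single, Finsupp.smul_apply, Finsupp.single_apply]
  by_cases h : b - eps m j + eps m i = c <;> simp [h] <;> ring
end

noncomputable section
lemma key_coef (m : ℕ) (i1 j1 i2 j2 : Fin m) (x : Wsp m)
    (hx0 : (Eop m i1 j1 + Eop m i2 j2) x = 0)
    (b0 : Fin m → ℂ) (hb0 : b0 ∈ x.support)
    (hex : ∀ b ∈ x.support, b - eps m j2 + eps m i2 ≠ b0 - eps m j1 + eps m i1) :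
    coefE m i1 j1 b0 = 0 := by
  set c := b0 - eps m j1 + eps m i1 with hc
  have h0 : ((Eop m i1 j1 + Eop m i2 j2) x) c = 0 := by rw [hx0]; rfl
  rw [LinearMap.add_apply, Finsupp.add_apply, Eop_apply, Eop_apply] at h0
  have h2 : ∑ b ∈ x.support, x b * coefE m i2 j2 b *
      (if b - eps m j2 + eps m i2 = c then 1 else 0) = 0 := by
    refine Finset.sum_eq_zero fun b hb => ?_
    rw [if_neg (hex b hb), mul_zero]
  have h1 : ∑ b ∈ x.support, x b * coefE m i1 j1 b *
      (if b - eps m j1 + eps m i1 = c then 1 else 0) = x b0 * coefE m i1 j1 b0 := by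
    rw [Finset.sum_eq_single b0]
    · rw [if_pos hc.symm.symm, mul_one]
    · intro b hb hne
      rw [if_neg, mul_zero]
      intro heq
      exact hne (sub_left_inj.mp ((add_left_inj _).mp (heq.trans hc)))
    · intro h; exact absurd hb0 h
  rw [h1, h2, add_zero] at h0
  exact (mul_eq_zero.mp h0).resolve_left (Finsupp.mem_support_iff.mp hb0)
end

noncomputable section
/-- weighted sum of real parts -/
def Fw (m : ℕ) (w : Fin m → ℝ) (b : Fin m → ℂ) : ℝ := ∑ i, w i * (b i).re

lemma Fw_add_eps (m : ℕ) (w : Fin m → ℝ) (b : Fin m → ℂ) (t : Fin m) :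
    Fw m w (b + eps m t) = Fw m w b + w t := by
  simp only [Fw, Pi.add_apply, eps, Complex.add_re, apply_ite Complex.re,
    Complex.one_re, Complex.zero_re, mul_add, Finset.sum_add_distrib, mul_ite,
    mul_one, mul_zero, Finset.sum_ite_eq', Finset.mem_univ, if_true]

lemma Fw_sub_eps (m : ℕ) (w : Fin m → ℝ) (b : Fin m → ℂ) (t : Fin m) :
    Fw m w (b - eps m t) = Fw m w b - w t := by
  simp only [Fw, Pi.sub_apply, eps, Complex.sub_re, apply_ite Complex.re,
    Complex.one_re, Complex.zero_re, mul_sub, Finset.sum_sub_distrib, mul_ite,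
    mul_one, mul_zero, Finset.sum_ite_eq', Finset.mem_univ, if_true]

lemma negInt_int {k : ℤ} (h : k < 0) : NegInt (k : ℂ) := ⟨k, h, rfl⟩

lemma not_negInt_nat (k : ℕ) : ¬ NegInt (k : ℂ) := by
  rintro ⟨k', hk', he⟩
  have : (k : ℤ) = k' := by exact_mod_cast he
  omega

lemma not_negInt_shift {a : ℂ} (ha : ∀ k : ℤ, a ≠ (k : ℂ)) (k : ℤ) :
    ¬ NegInt (a + (k : ℂ)) := by
  rintro ⟨k', _, he⟩
  exact ha (k' - k) (by push_cast; linear_combination he)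

lemma ne_zero_shift {a : ℂ} (ha : ∀ k : ℤ, a ≠ (k : ℂ)) (k : ℤ) :
    a + (k : ℂ) ≠ 0 := by
  intro h
  exact ha (-k) (by push_cast; linear_combination h)

lemma sub_eps_apply_ne {m : ℕ} (b : Fin m → ℂ) {i j : Fin m} (h : i ≠ j) :
    (b - eps m j) i = b i := by
  simp [eps, h]
end

noncomputable section
/-- weight for part 1 (maximize) -/
def w1f (n : ℕ) : Fin (n + n) → ℝ := fun i => if (i : ℕ) < n - 1 then (n : ℝ) - 1 - (i : ℕ) else 0
/-- weight for part 2 (minimize) -/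
def w2f (n : ℕ) : Fin (n + n) → ℝ := fun i => if n < (i : ℕ) then ((i : ℕ) : ℝ) - n else 0
end


noncomputable section

set_option maxHeartbeats 1000000 in
lemma part1_main (n : ℕ) (a1 a2 : ℂ) (ha1 : ∀ k : ℤ, a1 ≠ (k : ℂ))
    (x : Wsp (n + n)) (hsupp : ∀ b ∈ x.support, b ∈ adm n a1 a2)
    (j : ℕ) (hj : j + 1 < n) (p1 p2 p3 p4 : Fin (n + n))
    (h1 : (p1 : ℕ) = j) (h2 : (p2 : ℕ) = j + 1) (h3 : (p3 : ℕ) = n + j)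
    (h4 : (p4 : ℕ) = n + j + 1)
    (hx0 : (Eop (n + n) p1 p2 + Eop (n + n) p3 p4) x = 0)
    (b0 : Fin (n + n) → ℂ) (hb0 : b0 ∈ x.support)
    (hmax : ∀ b ∈ x.support, Fw (n + n) (w1f n) b ≤ Fw (n + n) (w1f n) b0)
    (hne : b0 p1 ≠ -1) : False := by
  have hex : ∀ b ∈ x.support,
      b - eps (n + n) p4 + eps (n + n) p3 ≠ b0 - eps (n + n) p2 + eps (n + n) p1 := by
    intro b hb heq
    have hb' : b = b0 - eps (n + n) p2 + eps (n + n) p1 - eps (n + n) p3 + eps (n + n) p4 := by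
      rw [← heq]; abel
    have hF : Fw (n + n) (w1f n) b
        = Fw (n + n) (w1f n) b0 - w1f n p2 + w1f n p1 - w1f n p3 + w1f n p4 := by
      rw [hb', Fw_add_eps, Fw_sub_eps, Fw_add_eps, Fw_sub_eps]
    have hw3 : w1f n p3 = 0 := by
      simp only [w1f]; rw [if_neg (by omega)]
    have hw4 : w1f n p4 = 0 := by
      simp only [w1f]; rw [if_neg (by omega)]
    have hw1v : w1f n p1 = (n : ℝ) - 1 - (j : ℕ) := by
      simp only [w1f, h1]; rw [if_pos (by omega)]
    have hw12 : w1f n p1 - w1f n p2 = 1 := by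
      by_cases hc : j + 1 < n - 1
      · have hw2v : w1f n p2 = (n : ℝ) - 1 - ((j + 1 : ℕ) : ℝ) := by
          simp only [w1f, h2]; rw [if_pos (by omega)]
        rw [hw1v, hw2v]; push_cast; ring
      · have hw2v : w1f n p2 = 0 := by
          simp only [w1f, h2]; rw [if_neg (by omega)]
        have hje : j + 1 = n - 1 := by omega
        have hr : ((j : ℕ) : ℝ) + 1 = (n : ℝ) - 1 := by
          have h' : ((j + 1 : ℕ) : ℝ) = ((n - 1 : ℕ) : ℝ) := by rw [hje]
          push_cast [Nat.cast_sub (by omega : 1 ≤ n)] at h'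
          linarith
        rw [hw1v, hw2v]; linarith
    have hle := hmax b hb
    rw [hF, hw3, hw4] at hle
    linarith
  have hkey := key_coef (n + n) p1 p2 p3 p4 x hx0 b0 hb0 hex
  obtain ⟨hadm, -⟩ := hsupp b0 hb0
  have hp12 : p1 ≠ p2 := by
    intro h; have h' := congrArg Fin.val h; omega
  have hq : (b0 - eps (n + n) p2) p1 = b0 p1 := sub_eps_apply_ne b0 hp12
  obtain ⟨k, hk0, hbk⟩ := (hadm p1).1 (by omega)
  have hkne : k ≠ -1 := by
    intro h
    apply hne
    rw [hbk, h]; norm_num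
  have hq1 : (if NegInt ((b0 - eps (n + n) p2) p1) then (b0 - eps (n + n) p2) p1 + 1 else 1)
      = (k : ℂ) + 1 := by
    rw [hq, hbk, if_pos (negInt_int hk0)]
  have hqne : (k : ℂ) + 1 ≠ 0 := by
    have h' : ((k + 1 : ℤ) : ℂ) ≠ 0 := Int.cast_ne_zero.mpr (by omega)
    push_cast at h'; exact h'
  have hpne : (if NegInt (b0 p2) then 1 else b0 p2) ≠ 0 := by
    by_cases hc : (p2 : ℕ) < n - 1
    · obtain ⟨k2, hk20, hbk2⟩ := (hadm p2).1 hc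
      rw [hbk2, if_pos (negInt_int hk20)]; exact one_ne_zero
    · obtain ⟨k2, hbk2⟩ := (hadm p2).2.1 (by omega)
      rw [hbk2, if_neg (not_negInt_shift ha1 k2)]
      exact ne_zero_shift ha1 k2
  rw [coefE, hq1] at hkey
  exact (mul_ne_zero hpne hqne) hkey

set_option maxHeartbeats 1000000 in
lemma part2_main (n : ℕ) (a1 a2 : ℂ) (ha2 : ∀ k : ℤ, a2 ≠ (k : ℂ))
    (x : Wsp (n + n)) (hsupp : ∀ b ∈ x.support, b ∈ adm n a1 a2)
    (j : ℕ) (hj : j + 1 < n) (p1 p2 p3 p4 : Fin (n + n))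
    (h1 : (p1 : ℕ) = j) (h2 : (p2 : ℕ) = j + 1) (h3 : (p3 : ℕ) = n + j)
    (h4 : (p4 : ℕ) = n + j + 1)
    (hx0 : (Eop (n + n) p1 p2 + Eop (n + n) p3 p4) x = 0)
    (b1 : Fin (n + n) → ℂ) (hb1 : b1 ∈ x.support)
    (hmin : ∀ b ∈ x.support, Fw (n + n) (w2f n) b1 ≤ Fw (n + n) (w2f n) b)
    (hne : b1 p4 ≠ 0) : False := by
  have hx0' : (Eop (n + n) p3 p4 + Eop (n + n) p1 p2) x = 0 := by
    rw [LinearMap.add_apply] at hx0 ⊢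
    rw [add_comm (Eop (n + n) p3 p4 x)]; exact hx0
  have hex : ∀ b ∈ x.support,
      b - eps (n + n) p2 + eps (n + n) p1 ≠ b1 - eps (n + n) p4 + eps (n + n) p3 := by
    intro b hb heq
    have hb' : b = b1 - eps (n + n) p4 + eps (n + n) p3 - eps (n + n) p1 + eps (n + n) p2 := by
      rw [← heq]; abel
    have hF : Fw (n + n) (w2f n) b
        = Fw (n + n) (w2f n) b1 - w2f n p4 + w2f n p3 - w2f n p1 + w2f n p2 := by
      rw [hb', Fw_add_eps, Fw_sub_eps, Fw_add_eps, Fw_sub_eps]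
    have hw1 : w2f n p1 = 0 := by
      simp only [w2f]; rw [if_neg (by omega)]
    have hw2 : w2f n p2 = 0 := by
      simp only [w2f]; rw [if_neg (by omega)]
    have hw4v : w2f n p4 = ((n + j + 1 : ℕ) : ℝ) - (n : ℝ) := by
      simp only [w2f, h4]; rw [if_pos (by omega)]
    have hw34 : w2f n p3 - w2f n p4 = -1 := by
      by_cases hc : 0 < j
      · have hw3v : w2f n p3 = ((n + j : ℕ) : ℝ) - (n : ℝ) := by
          simp only [w2f, h3]; rw [if_pos (by omega)]
        rw [hw3v, hw4v]; push_cast; ring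
      · have hw3v : w2f n p3 = 0 := by
          simp only [w2f]; rw [if_neg (by omega)]
        have hj0 : j = 0 := by omega
        subst hj0
        rw [hw3v, hw4v]; push_cast; ring
    have hle := hmin b hb
    rw [hF, hw1, hw2] at hle
    linarith
  have hkey := key_coef (n + n) p3 p4 p1 p2 x hx0' b1 hb1 hex
  obtain ⟨hadm, -⟩ := hsupp b1 hb1
  have hp34 : p3 ≠ p4 := by
    intro h; have h' := congrArg Fin.val h; omega
  have hq : (b1 - eps (n + n) p4) p3 = b1 p3 := sub_eps_apply_ne b1 hp34
  have hqc : (if NegInt ((b1 - eps (n + n) p4) p3) then (b1 - eps (n + n) p4) p3 + 1 else 1)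
      = 1 := by
    rw [hq]
    by_cases hc : 0 < j
    · obtain ⟨k2, hbk2⟩ := (hadm p3).2.2.2 (by omega)
      rw [hbk2, if_neg (not_negInt_nat k2)]
    · obtain ⟨k2, hbk2⟩ := (hadm p3).2.2.1 (by omega)
      rw [hbk2, if_neg (not_negInt_shift ha2 k2)]
  obtain ⟨k, hbk⟩ := (hadm p4).2.2.2 (by omega)
  have hpne : (if NegInt (b1 p4) then 1 else b1 p4) ≠ 0 := by
    rw [hbk, if_neg (not_negInt_nat k)]
    rw [hbk] at hne
    exact hne
  rw [coefE, hqc, mul_one] at hkey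
  exact hpne hkey

end

/-- a nonzero `𝔟⁺`-highest weight vector in `N_{a₁,a₂}` which is a weight
vector contains in its support an index `b^{k₀}` with first `n−1` entries equal to `−1`
and an index `b^{k₁}` with last `n−1` entries equal to `0`. -/
theorem hw_support (n : ℕ) (hn : 1 < n) (a1 a2 : ℂ)
    (ha1 : ∀ k : ℤ, a1 ≠ (k : ℂ)) (ha2 : ∀ k : ℤ, a2 ≠ (k : ℂ))
    (x : Wsp (n + n)) (hx : x ≠ 0)
    (hsupp : ∀ b ∈ x.support, b ∈ adm n a1 a2)
    (hwt : ∀ b ∈ x.support, ∀ b' ∈ x.support,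
      wtTheta n b = wtTheta n b' ∧ ∀ (i : ℕ) (h : i + 1 < n), wtHn n b i h = wtHn n b' i h)
    (hann : ∀ (i : ℕ) (h : i + 1 < n), XopB n i h x = 0) :
    (∃ b0 ∈ x.support, ∀ i : Fin (n + n), (i : ℕ) < n - 1 → b0 i = -1) ∧
    (∃ b1 ∈ x.support, ∀ i : Fin (n + n), n < (i : ℕ) → b1 i = 0) := by
  have hsne : x.support.Nonempty := Finsupp.support_nonempty_iff.mpr hx
  constructor
  · obtain ⟨b0, hb0, hmax⟩ := Finset.exists_max_image x.support (Fw (n + n) (w1f n)) hsne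
    refine ⟨b0, hb0, fun i hi => ?_⟩
    by_contra hne
    have hilt : (i : ℕ) < n + n := i.isLt
    have hj : (i : ℕ) + 1 < n := by omega
    have hie : i = ⟨(i : ℕ), by omega⟩ := Fin.ext rfl
    rw [hie] at hne
    exact part1_main n a1 a2 ha1 x hsupp (i : ℕ) hj
      ⟨(i : ℕ), by omega⟩ ⟨(i : ℕ) + 1, by omega⟩ ⟨n + (i : ℕ), by omega⟩
      ⟨n + (i : ℕ) + 1, by omega⟩ rfl rfl rfl rfl (hann (i : ℕ) hj) b0 hb0 hmax hne
  · obtain ⟨b1, hb1, hmin⟩ := Finset.exists_min_image x.support (Fw (n + n) (w2f n)) hsne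
    refine ⟨b1, hb1, fun i hi => ?_⟩
    by_contra hne
    have hilt : (i : ℕ) < n + n := i.isLt
    have hj : ((i : ℕ) - n - 1) + 1 < n := by omega
    have hie : i = ⟨n + ((i : ℕ) - n - 1) + 1, by omega⟩ := Fin.ext (by simp; omega)
    rw [hie] at hne
    exact part2_main n a1 a2 ha2 x hsupp ((i : ℕ) - n - 1) hj
      ⟨(i : ℕ) - n - 1, by omega⟩ ⟨(i : ℕ) - n - 1 + 1, by omega⟩
      ⟨n + ((i : ℕ) - n - 1), by omega⟩ ⟨n + ((i : ℕ) - n - 1) + 1, by omega⟩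
      rfl rfl rfl rfl (hann ((i : ℕ) - n - 1) hj) b1 hb1 hmin hne
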